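/- arXiv:1907.00364 — 4 statements merged into one kernel-verified Lean document; each statement's English description precedes it below -/
import Mathlib

section
/- Let {xₙ} be a sequence in a proper metric space that is Fejér convergent with respect to a nonempty set K, and suppose every cluster point of {xₙ} belongs to K. Then {xₙ} converges to a point of K. -/
theorem fejer_converges_of_cluster {X : Type*} [MetricSpace X] [ProperSpace X]
    (K : Set X) (hK : K.Nonempty)
    (x : ℕ → X) (hfejer : ∀ p ∈ K, ∀ n : ℕ, dist (x (n + 1)) p ≤ dist (x n) p)
    (hcluster : ∀ p : X,
      (∃ φ : ℕ → ℕ, StrictMono φ ∧ Filter.Tendsto (x ∘ φ) Filter.atTop (nhds p)) → p ∈ K) :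
    ∃ p ∈ K, Filter.Tendsto x Filter.atTop (nhds p) := by
  obtain ⟨p₀, hp₀⟩ := hK
  have hanti : ∀ q ∈ K, Antitone fun n => dist (x n) q := fun q hq =>
    antitone_nat_of_succ_le fun n => hfejer q hq n
  -- sequence lies in a compact closed ball
  have hball : ∀ n, x n ∈ Metric.closedBall p₀ (dist (x 0) p₀) := fun n =>
    (hanti p₀ hp₀ (Nat.zero_le n))
  obtain ⟨p, _, φ, hφ, hconv⟩ :=
    (isCompact_closedBall p₀ (dist (x 0) p₀)).tendsto_subseq hball
  have hp : p ∈ K := hcluster p ⟨φ, hφ, hconv⟩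
  refine ⟨p, hp, ?_⟩
  rw [tendsto_iff_dist_tendsto_zero]
  have hA := hanti p hp
  have hbdd : BddBelow (Set.range fun n => dist (x n) p) :=
    ⟨0, by rintro r ⟨n, rfl⟩; exact dist_nonneg⟩
  have hinf := tendsto_atTop_ciInf hA hbdd
  have hsub : Filter.Tendsto (fun n => dist (x (φ n)) p) Filter.atTop
      (nhds (⨅ n, dist (x n) p)) := hinf.comp hφ.tendsto_atTop
  have hsub0 : Filter.Tendsto (fun n => dist (x (φ n)) p) Filter.atTop (nhds 0) := by
    have := hconv.dist (tendsto_const_nhds (x := p))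
    simpa using this
  have : (⨅ n, dist (x n) p) = 0 := tendsto_nhds_unique hsub hsub0
  rwa [this] at hinf
end

section
/- Let F : K × K → ℝ be a monotone bifunction on a nonempty convex subset K of a real Hilbert space (i.e. F(x,y) + F(y,x) ≤ 0 for all x, y ∈ K), and let r > 0. If z₁, z₂ ∈ K satisfy F(zᵢ, y) − (1/r)⟨x − zᵢ, y − zᵢ⟩ ≥ 0 for all y ∈ K (i = 1, 2) for the same point x, then z₁ = z₂. That is, the resolvent of F is single-valued. -/
open RealInnerProductSpace

theorem resolvent_single_valued {H : Type*} [NormedAddCommGroup H] [InnerProductSpace ℝ H]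
    (K : Set H) (hK : K.Nonempty) (hKconv : Convex ℝ K)
    (F : H → H → ℝ) (hmono : ∀ x ∈ K, ∀ y ∈ K, F x y + F y x ≤ 0)
    (r : ℝ) (hr : 0 < r) (x : H) (z₁ z₂ : H) (hz₁ : z₁ ∈ K) (hz₂ : z₂ ∈ K)
    (h₁ : ∀ y ∈ K, F z₁ y - (1 / r) * ⟪x - z₁, y - z₁⟫ ≥ 0)
    (h₂ : ∀ y ∈ K, F z₂ y - (1 / r) * ⟪x - z₂, y - z₂⟫ ≥ 0) :
    z₁ = z₂ := by
  have A := h₁ z₂ hz₂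
  have B := h₂ z₁ hz₁
  have M := hmono z₁ hz₁ z₂ hz₂
  have key : ⟪x - z₁, z₂ - z₁⟫ + ⟪x - z₂, z₁ - z₂⟫ = ‖z₂ - z₁‖ ^ 2 := by
    have h : (⟪z₂ - z₁, z₂ - z₁⟫ : ℝ) = ‖z₂ - z₁‖ ^ 2 := real_inner_self_eq_norm_sq _
    simp only [inner_sub_left, inner_sub_right] at *
    nlinarith [real_inner_comm z₁ z₂, real_inner_comm x z₁, real_inner_comm x z₂]
  have hsum : (1 / r) * (⟪x - z₁, z₂ - z₁⟫ + ⟪x - z₂, z₁ - z₂⟫) ≤ 0 := by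
    have := mul_pos (one_div_pos.mpr hr) (by positivity : (0:ℝ) < 1)
    nlinarith
  rw [key] at hsum
  have hn : ‖z₂ - z₁‖ ^ 2 ≤ 0 := by
    have hrpos : 0 < 1 / r := one_div_pos.mpr hr
    nlinarith
  have : z₂ - z₁ = 0 := by
    have := sq_nonneg ‖z₂ - z₁‖
    have : ‖z₂ - z₁‖ = 0 := by nlinarith
    simpa using this
  exact (sub_eq_zero.mp this).symm
end

section
/- Let F : K × K → ℝ be a monotone bifunction on a nonempty convex subset K of a real Hilbert space and r > 0. Define the resolvent T_r by T_r(x) = z iff z ∈ K and F(z, y) − (1/r)⟨x − z, y − z⟩ ≥ 0 for all y ∈ K. Then T_r is firmly nonexpansive: ‖T_r x − T_r y‖² ≤ ⟨x − y, T_r x − T_r y⟩ whenever T_r x and T_r y are defined. -/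
open RealInnerProductSpace

theorem resolvent_firmly_nonexpansive {H : Type*} [NormedAddCommGroup H] [InnerProductSpace ℝ H]
    (K : Set H) (hK : K.Nonempty) (hKconv : Convex ℝ K)
    (F : H → H → ℝ) (hmono : ∀ u ∈ K, ∀ v ∈ K, F u v + F v u ≤ 0)
    (r : ℝ) (hr : 0 < r) (x y : H) (zx zy : H) (hzx : zx ∈ K) (hzy : zy ∈ K)
    (hx : ∀ t ∈ K, F zx t - (1 / r) * ⟪x - zx, t - zx⟫ ≥ 0)
    (hy : ∀ t ∈ K, F zy t - (1 / r) * ⟪y - zy, t - zy⟫ ≥ 0) :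
    ‖zx - zy‖ ^ 2 ≤ ⟪x - y, zx - zy⟫ := by
  have h1 := hx zy hzy
  have h2 := hy zx hzx
  have h3 := hmono zx hzx zy hzy
  have hsum : ⟪x - zx, zy - zx⟫ + ⟪y - zy, zx - zy⟫ ≤ 0 := by
    have hrinv : (0:ℝ) < 1 / r := by positivity
    nlinarith [mul_pos hrinv hr]
  have key : ⟪x - y, zx - zy⟫ - ⟪zx - zy, zx - zy⟫ ≥ 0 := by
    have : ⟪x - y, zx - zy⟫ - ⟪zx - zy, zx - zy⟫
        = -(⟪x - zx, zy - zx⟫ + ⟪y - zy, zx - zy⟫) := by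
      simp only [inner_sub_left, inner_sub_right]
      ring
    linarith [this ▸ neg_nonneg.mpr hsum]
  have := real_inner_self_eq_norm_sq (zx - zy)
  nlinarith
end

section
/- Let F : K × K → ℝ be a bifunction on a nonempty convex subset K of a real Hilbert space such that F(x,x) = 0 for all x, y ↦ F(x,y) is convex for each x, and x ↦ F(x,y) is upper semicontinuous along segments for each y. If x* ∈ K satisfies F(y, x*) ≤ 0 for all y ∈ K, then F(x*, y) ≥ 0 for all y ∈ K (Minty-type lemma for equilibrium problems). -/
theorem minty_equilibrium {H : Type*} [NormedAddCommGroup H] [InnerProductSpace ℝ H]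
    (K : Set H) (hK : K.Nonempty) (hKconv : Convex ℝ K)
    (F : H → H → ℝ)
    (hdiag : ∀ x ∈ K, F x x = 0)
    (hconv : ∀ x ∈ K, ConvexOn ℝ K (fun y => F x y))
    (husc : ∀ y ∈ K, UpperSemicontinuousOn (fun x => F x y) K)
    (xs : H) (hxs : xs ∈ K) (h : ∀ y ∈ K, F y xs ≤ 0) :
    ∀ y ∈ K, F xs y ≥ 0 := by
  intro y hy
  by_contra hlt
  push_neg at hlt
  set g : ℝ → H := fun t => (1 - t) • xs + t • y with hg
  have hgK : ∀ t ∈ Set.Ioc (0:ℝ) 1, g t ∈ K := fun t ht =>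
    hKconv hxs hy (by linarith [ht.2]) (le_of_lt ht.1) (by ring)
  have hIoc : Set.Ioc (0:ℝ) 1 ∈ nhdsWithin (0:ℝ) (Set.Ioi 0) :=
    Ioc_mem_nhdsGT_of_mem (by constructor <;> norm_num)
  -- F (g t) y ≥ 0 for t ∈ (0,1]
  have hpos : ∀ t ∈ Set.Ioc (0:ℝ) 1, 0 ≤ F (g t) y := by
    intro t ht
    have hzK := hgK t ht
    have hcv := (hconv (g t) hzK).2 hxs hy 
      (show (0:ℝ) ≤ 1 - t by linarith [ht.2]) ht.1.le (show (1 - t) + t = 1 by ring)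
    have h0 : F (g t) (g t) = 0 := hdiag _ hzK
    have h1 : F (g t) xs ≤ 0 := h _ hzK
    have hkey : (0:ℝ) ≤ (1 - t) * F (g t) xs + t * F (g t) y := by
      rw [← h0]; simpa [hg, smul_eq_mul] using hcv
    by_contra hneg
    push_neg at hneg
    nlinarith [mul_pos ht.1 (neg_pos.2 hneg),
      mul_nonpos_of_nonneg_of_nonpos (by linarith [ht.2] : (0:ℝ) ≤ 1 - t) h1]
  -- g tends to xs within K as t → 0⁺
  have hcont : Filter.Tendsto g (nhds 0) (nhds xs) := by
    have : Continuous g := by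
      apply Continuous.add <;> exact Continuous.smul (by continuity) continuous_const
    simpa [hg] using this.tendsto' 0 xs (by simp [hg])
  have htend : Filter.Tendsto g (nhdsWithin (0:ℝ) (Set.Ioi 0)) (nhdsWithin xs K) := by
    apply tendsto_nhdsWithin_of_tendsto_nhds_of_eventually_within
    · exact hcont.mono_left nhdsWithin_le_nhds
    · filter_upwards [hIoc] with t ht using hgK t ht
  have hev : ∀ᶠ x in nhdsWithin xs K, F x y < 0 := husc y hy xs hxs 0 hlt
  have hev2 := htend.eventually hev
  have hev3 : ∀ᶠ t in nhdsWithin (0:ℝ) (Set.Ioi 0), (0:ℝ) ≤ F (g t) y := by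
    filter_upwards [hIoc] with t ht using hpos t ht
  rcases (hev2.and hev3).exists with ⟨t, h1, h2⟩
  linarith
end
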